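/- arXiv:2403.04565 — 2 statements merged into one kernel-verified Lean document; each statement's English description precedes it below -/
import Mathlib

section
/- Let A be a commutative ring and let M be an A[X]-module which is finitely generated and projective as an A-module. Then there exists a short exact sequence of A[X]-modules 0 → P₁ → P₀ → M → 0 in which P₀ and P₁ are finitely generated projective A[X]-modules (one may take P₀ = P₁ = A[X] ⊗_A M). -/
/-!
`M` is the cokernel of `X ⊗ 1 - 1 ⊗ X` on `A[X] ⊗_A M`. For any `A`-linear endomorphism `φ`
of `M`, the map `X ⊗ 1 - 1 ⊗ φ` is injective: if `d` is the top degree of `t ≠ 0`, the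
coefficient of degree `d + 1` of its image is the top coefficient of `t`. Modulo the image,
`X p ⊗ m ≡ p ⊗ X m`, so by induction on `p` every `p ⊗ m` is congruent to `1 ⊗ p m`, which is
exactness in the middle. Finiteness and projectivity of `A[X] ⊗_A M` come from base change.
-/

open TensorProduct Polynomial

namespace Polynomial

section Endomorphism

variable {A M : Type*} [CommRing A] [AddCommGroup M] [Module A M]

noncomputable def tensorCoeffs : A[X] ⊗[A] M ≃ₗ[A] ℕ →₀ M :=
  TensorProduct.equivFinsuppOfBasisLeft (basisMonomials A)

lemma tensorCoeffs_tmul_apply (p : A[X]) (m : M) (n : ℕ) :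
    tensorCoeffs (p ⊗ₜ[A] m) n = p.coeff n • m :=
  TensorProduct.equivFinsuppOfBasisLeft_apply_tmul_apply _ _ _ _

noncomputable def tensorXSub (φ : Module.End A M) : A[X] ⊗[A] M →ₗ[A[X]] A[X] ⊗[A] M :=
  (X : A[X]) • LinearMap.id - φ.baseChange A[X]

lemma tensorXSub_tmul (φ : Module.End A M) (p : A[X]) (m : M) :
    tensorXSub φ (p ⊗ₜ[A] m) = (X * p) ⊗ₜ[A] m - p ⊗ₜ[A] φ m := by
  simp [tensorXSub, smul_tmul']

lemma tensorCoeffs_tensorXSub_succ (φ : Module.End A M) (t : A[X] ⊗[A] M) (n : ℕ) :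
    tensorCoeffs (tensorXSub φ t) (n + 1) = tensorCoeffs t n - φ (tensorCoeffs t (n + 1)) := by
  induction t with
  | zero => simp
  | tmul p m => simp [tensorXSub_tmul, tensorCoeffs_tmul_apply, coeff_X_mul]
  | add t u ht hu =>
    simp only [map_add, Finsupp.add_apply, ht, hu]
    abel

theorem tensorXSub_injective (φ : Module.End A M) : Function.Injective (tensorXSub φ) := by
  refine (injective_iff_map_eq_zero _).mpr fun t ht => ?_
  by_contra ht_ne
  have hc : tensorCoeffs t ≠ 0 := (LinearEquiv.map_ne_zero_iff _).mpr ht_ne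
  set d := (tensorCoeffs t).support.max' (Finsupp.support_nonempty_iff.mpr hc)
  have htop : tensorCoeffs t (d + 1) = 0 := Finsupp.notMem_support_iff.mp fun h => by
    have := (tensorCoeffs t).support.le_max' _ h
    omega
  have hd := tensorCoeffs_tensorXSub_succ φ t d
  simp only [ht, htop, map_zero, sub_zero, Finsupp.zero_apply] at hd
  exact Finsupp.mem_support_iff.mp (Finset.max'_mem _ _) hd.symm

end Endomorphism

section PolynomialModule

variable (A M : Type*) [CommRing A] [AddCommGroup M] [Module A M]
  [Module A[X] M] [IsScalarTower A A[X] M]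

noncomputable def smulXEnd : Module.End A M :=
  DistribSMul.toLinearMap A M (X : A[X])

variable {A M}

lemma liftBaseChange_comp_tensorXSub_smulXEnd :
    LinearMap.liftBaseChange A[X] LinearMap.id ∘ₗ tensorXSub (smulXEnd A M) = 0 :=
  TensorProduct.AlgebraTensorModule.ext fun p m => by
    simp [tensorXSub_tmul, smulXEnd, mul_smul, smul_comm p (X : A[X]) m]

lemma tmul_sub_one_tmul_smul_mem_range (p : A[X]) (m : M) :
    p ⊗ₜ[A] m - 1 ⊗ₜ[A] (p • m) ∈ LinearMap.range (tensorXSub (smulXEnd A M)) := by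
  induction p using Polynomial.induction_on with
  | C a =>
    rw [← algebraMap_eq, algebraMap_smul, Algebra.algebraMap_eq_smul_one, smul_tmul, sub_self]
    exact Submodule.zero_mem _
  | add p q hp hq =>
    convert Submodule.add_mem _ hp hq using 1
    rw [add_tmul, add_smul, tmul_add]
    abel
  | monomial n a ih =>
    set p := C a * X ^ n
    have hX : (C a * X ^ (n + 1) : A[X]) = X * p := by ring
    have hsplit : (X * p) ⊗ₜ[A] m - 1 ⊗ₜ[A] ((X * p) • m) =
        (X : A[X]) • (p ⊗ₜ[A] m - 1 ⊗ₜ[A] (p • m)) +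
          tensorXSub (smulXEnd A M) (1 ⊗ₜ[A] (p • m)) := by
      simp [tensorXSub_tmul, smulXEnd, smul_sub, smul_tmul', mul_smul]
    rw [hX, hsplit]
    exact Submodule.add_mem _ (Submodule.smul_mem _ _ ih) (LinearMap.mem_range_self _ _)

theorem range_tensorXSub_smulXEnd :
    LinearMap.range (tensorXSub (smulXEnd A M)) =
      LinearMap.ker (LinearMap.liftBaseChange A[X] (LinearMap.id : M →ₗ[A] M)) := by
  refine le_antisymm (LinearMap.range_le_ker_iff.mpr liftBaseChange_comp_tensorXSub_smulXEnd)
    fun t ht => ?_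
  have hmem : ∀ u : A[X] ⊗[A] M, u - 1 ⊗ₜ[A] LinearMap.liftBaseChange A[X] LinearMap.id u ∈
      LinearMap.range (tensorXSub (smulXEnd A M)) := by
    intro u
    induction u with
    | zero => simp
    | tmul p m => simpa using tmul_sub_one_tmul_smul_mem_range p m
    | add u v hu hv =>
      convert Submodule.add_mem _ hu hv using 1
      rw [map_add, tmul_add]
      abel
  simpa [LinearMap.mem_ker.mp ht] using hmem t

end PolynomialModule

end Polynomial

/-- Let `A` be a commutative ring and `M` an `A[X]`-module which is finitely generated
and projective as an `A`-module.  Then there is a short exact sequence of `A[X]`-modules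
`0 → P₁ → P₀ → M → 0` in which `P₀` and `P₁` are finitely generated projective
`A[X]`-modules; indeed one may take `P₀ = P₁ = A[X] ⊗_A M`. -/
theorem exists_length_one_projective_resolution_over_polynomial_ring
    (A : Type*) [CommRing A]
    (M : Type*) [AddCommGroup M] [Module A M]
    [Module (Polynomial A) M] [IsScalarTower A (Polynomial A) M]
    [Module.Finite A M] [Module.Projective A M] :
    ∃ (f : Polynomial A ⊗[A] M →ₗ[Polynomial A] Polynomial A ⊗[A] M)
      (g : Polynomial A ⊗[A] M →ₗ[Polynomial A] M),
      Module.Finite (Polynomial A) (Polynomial A ⊗[A] M) ∧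
      Module.Projective (Polynomial A) (Polynomial A ⊗[A] M) ∧
      Function.Injective f ∧
      Function.Surjective g ∧
      LinearMap.range f = LinearMap.ker g :=
  ⟨tensorXSub (smulXEnd A M), LinearMap.liftBaseChange A[X] LinearMap.id, inferInstance,
    inferInstance, tensorXSub_injective _, fun m => ⟨1 ⊗ₜ[A] m, by simp⟩,
    range_tensorXSub_smulXEnd⟩
end

section
/- Let R be a commutative ring and I ⊆ R an ideal with I² = 0, and set R₀ = R/I. If B and B′ are étale R-algebras such that R₀ ⊗_R B and R₀ ⊗_R B′ are isomorphic as R₀-algebras, then B and B′ are isomorphic as R-algebras. -/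
/-!
The map `B → R₀ ⊗_R B` is surjective with kernel `I B`, which squares to zero. Formal smoothness
lifts the isomorphism `R₀ ⊗_R B ≃ R₀ ⊗_R B′` to maps `B → B′` and `B′ → B`; both composites lift
the identity modulo a square-zero ideal, so formal unramifiedness forces them to be the identity.
-/

open TensorProduct

namespace Algebra.TensorProduct

variable {R : Type*} [CommRing R] (I : Ideal R) (A : Type*) [CommRing A] [Algebra R A]

lemma includeRight_quotient_surjective :
    Function.Surjective (includeRight : A →ₐ[R] (R ⧸ I) ⊗[R] A) :=
  includeRight_surjective A Ideal.Quotient.mk_surjective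

lemma ker_includeRight_quotient :
    RingHom.ker ((includeRight : A →ₐ[R] (R ⧸ I) ⊗[R] A) : A →+* (R ⧸ I) ⊗[R] A) =
      I.map (algebraMap R A) := by
  have hfactor : (includeRight : A →ₐ[R] (R ⧸ I) ⊗[R] A) =
      ((quotIdealMapEquivQuotTensor A I).toAlgHom.restrictScalars R).comp
        (Ideal.Quotient.mkₐ R (I.map (algebraMap R A))) := by
    ext a
    simp
  ext x
  rw [RingHom.mem_ker, RingHom.coe_coe, hfactor, AlgHom.comp_apply, AlgHom.restrictScalars_apply,
    AlgEquiv.coe_toAlgHom, map_eq_zero_iff _ (AlgEquiv.injective _), Ideal.Quotient.mkₐ_eq_mk,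
    Ideal.Quotient.eq_zero_iff_mem]

lemma isNilpotent_ker_includeRight_quotient (hI : IsNilpotent I) :
    IsNilpotent (RingHom.ker ((includeRight : A →ₐ[R] (R ⧸ I) ⊗[R] A) : A →+* (R ⧸ I) ⊗[R] A)) := by
  rw [ker_includeRight_quotient]
  exact hI.map (Ideal.mapHom (algebraMap R A))

end Algebra.TensorProduct

namespace Algebra

variable {R A A' C : Type*} [CommRing R] [CommRing A] [Algebra R A] [CommRing A'] [Algebra R A']
  [CommRing C] [Algebra R C] (p : A →ₐ[R] C) (p' : A' →ₐ[R] C)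
  (hp : Function.Surjective p) (hp' : Function.Surjective p')
  (hkp : IsNilpotent (RingHom.ker (p : A →+* C)))
  (hkp' : IsNilpotent (RingHom.ker (p' : A' →+* C)))

theorem FormallySmooth.liftOfSurjective_comp_liftOfSurjective [FormallySmooth R A]
    [FormallySmooth R A'] [FormallyUnramified R A] :
    (FormallySmooth.liftOfSurjective p' p hp hkp).comp
      (FormallySmooth.liftOfSurjective p p' hp' hkp') = AlgHom.id R A := by
  apply FormallyUnramified.lift_unique' p hkp
  rw [← AlgHom.comp_assoc, FormallySmooth.comp_liftOfSurjective,
    FormallySmooth.comp_liftOfSurjective, AlgHom.comp_id]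

noncomputable def FormallyEtale.algEquivOfSurjective [FormallyEtale R A] [FormallyEtale R A'] :
    A ≃ₐ[R] A' :=
  .ofAlgHom (FormallySmooth.liftOfSurjective p p' hp' hkp')
    (FormallySmooth.liftOfSurjective p' p hp hkp)
    (FormallySmooth.liftOfSurjective_comp_liftOfSurjective p' p hp' hp hkp' hkp)
    (FormallySmooth.liftOfSurjective_comp_liftOfSurjective p p' hp hp' hkp hkp')

end Algebra

open Algebra Algebra.TensorProduct in
/-- Let `R` be a commutative ring and `I ⊆ R` an ideal with `I² = 0`, and set
`R₀ = R/I`.  If `B` and `B′` are étale `R`-algebras such that `R₀ ⊗_R B` and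
`R₀ ⊗_R B′` are isomorphic as `R₀`-algebras, then `B` and `B′` are isomorphic
as `R`-algebras. -/
theorem etale_lift_unique_of_square_zero
    (R : Type u) [CommRing R] (I : Ideal R) (hI : I ^ 2 = ⊥)
    (B : Type u) [CommRing B] [Algebra R B] [Algebra.Etale R B]
    (B' : Type u) [CommRing B'] [Algebra R B'] [Algebra.Etale R B']
    (e : Nonempty ((R ⧸ I) ⊗[R] B ≃ₐ[R ⧸ I] (R ⧸ I) ⊗[R] B')) :
    Nonempty (B ≃ₐ[R] B') := by
  obtain ⟨e⟩ := e
  have hInil : IsNilpotent I := ⟨2, hI⟩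
  let p' : B' →ₐ[R] (R ⧸ I) ⊗[R] B := (e.symm.restrictScalars R).toAlgHom.comp includeRight
  have hp' : Function.Surjective p' :=
    e.symm.surjective.comp (includeRight_quotient_surjective I B')
  have hkp' : IsNilpotent (RingHom.ker (p' : B' →+* (R ⧸ I) ⊗[R] B)) := by
    have hker : RingHom.ker (p' : B' →+* (R ⧸ I) ⊗[R] B) =
        RingHom.ker ((includeRight : B' →ₐ[R] (R ⧸ I) ⊗[R] B') : B' →+* (R ⧸ I) ⊗[R] B') :=
      RingHom.ker_comp_of_injective _ (f := (e.symm : (R ⧸ I) ⊗[R] B' →+* (R ⧸ I) ⊗[R] B))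
        e.symm.injective
    rw [hker]
    exact isNilpotent_ker_includeRight_quotient I B' hInil
  exact ⟨FormallyEtale.algEquivOfSurjective (C := (R ⧸ I) ⊗[R] B) includeRight p'
    (includeRight_quotient_surjective I B) hp' (isNilpotent_ker_includeRight_quotient I B hInil)
    hkp'⟩
end
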